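/- Let σ > 0, let δ_L < δ_U be real numbers, let θ ∈ ℝ with θ ≠ δ_L and θ ≠ δ_U, and let c ∈ ℝ. Set a_U = (δ_U − θ)/σ and a_L = (δ_L − θ)/σ, and define F : (0, ∞) → ℝ by F(n) = logit( Φ(a_U·√n − c) − Φ(a_L·√n − c) ). Then the derivative F′(n) converges, as n → ∞, to (1/2 − 𝟙{θ ∉ (δ_L, δ_U)}) · min{a_U², a_L²}; that is, the limit equals (1/2)·min{a_U², a_L²} when δ_L < θ < δ_U and equals −(1/2)·min{a_U², a_L²} when θ < δ_L or θ > δ_U. -/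

import Mathlib

open Real Filter MeasureTheory

/-- The standard normal density `φ(t) = (2π)^{-1/2} exp(-t²/2)`. -/
noncomputable def stdNormalPDF (t : ℝ) : ℝ :=
  (Real.sqrt (2 * Real.pi))⁻¹ * Real.exp (-(t ^ 2) / 2)

/-- The standard normal CDF `Φ(x) = ∫_{-∞}^x φ(t) dt`. -/
noncomputable def stdNormalCDF (x : ℝ) : ℝ :=
  ∫ t in Set.Iic x, stdNormalPDF t

/-- `logit(x) = log(x) − log(1−x)`. -/
noncomputable def logit (x : ℝ) : ℝ :=
  Real.log x - Real.log (1 - x)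


lemma pdf_pos (t : ℝ) : 0 < stdNormalPDF t := by
  unfold stdNormalPDF
  positivity

lemma pdf_continuous : Continuous stdNormalPDF := by
  unfold stdNormalPDF
  fun_prop

lemma pdf_eq (t : ℝ) : stdNormalPDF t = (Real.sqrt (2 * Real.pi))⁻¹ * Real.exp (-(1/2) * t ^ 2) := by
  unfold stdNormalPDF; ring_nf

lemma pdf_integrable : Integrable stdNormalPDF := by
  have h := integrable_exp_neg_mul_sq (b := 1/2) (by norm_num)
  have : stdNormalPDF = fun t => (Real.sqrt (2 * Real.pi))⁻¹ * Real.exp (-(1/2) * t ^ 2) := by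
    funext t; exact pdf_eq t
  rw [this]
  exact h.const_mul _

lemma integral_pdf : ∫ t, stdNormalPDF t = 1 := by
  simp_rw [pdf_eq]
  rw [integral_const_mul, integral_gaussian]
  rw [inv_mul_eq_one₀ (by positivity)]
  rw [show π / (1/2) = 2 * π by ring]

lemma hasDerivAt_cdf (x : ℝ) : HasDerivAt stdNormalCDF (stdNormalPDF x) x := by
  have key : ∀ y : ℝ, stdNormalCDF y = stdNormalCDF 0 + ∫ t in (0:ℝ)..y, stdNormalPDF t := by
    intro y
    rw [intervalIntegral.integral_Iic_sub_Iic (pdf_integrable.integrableOn)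
      (pdf_integrable.integrableOn) |>.symm] at *
    unfold stdNormalCDF
    ring
  have h := (pdf_continuous.integral_hasStrictDerivAt 0 x).hasDerivAt
  have h2 : HasDerivAt (fun y => stdNormalCDF 0 + ∫ t in (0:ℝ)..y, stdNormalPDF t) (stdNormalPDF x) x :=
    h.const_add _
  exact h2.congr_of_eventuallyEq (Eventually.of_forall key)

lemma cdf_strictMono : StrictMono stdNormalCDF :=
  strictMono_of_deriv_pos (fun x => by rw [(hasDerivAt_cdf x).deriv]; exact pdf_pos x)

lemma cdf_tendsto_one : Tendsto stdNormalCDF atTop (nhds 1) := by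
  have := (MeasureTheory.aecover_Iic (b := fun x : ℝ => x) (μ := (volume : Measure ℝ))
    tendsto_id).integral_tendsto_of_countably_generated pdf_integrable
  rwa [integral_pdf] at this

lemma cdf_lt_one (x : ℝ) : stdNormalCDF x < 1 := by
  have h1 : stdNormalCDF x < stdNormalCDF (x + 1) := cdf_strictMono (by linarith)
  have h2 : stdNormalCDF (x + 1) ≤ 1 := by
    refine ge_of_tendsto cdf_tendsto_one ?_
    filter_upwards [eventually_ge_atTop (x + 1)] with y hy
    exact cdf_strictMono.monotone hy
  linarith

lemma cdf_pos (x : ℝ) : 0 < stdNormalCDF x := by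
  unfold stdNormalCDF
  apply setIntegral_pos_iff_support_of_nonneg_ae ?_ ?_ |>.mpr
  · have : Function.support stdNormalPDF = Set.univ := by
      ext t; simp [Function.support, (pdf_pos t).ne']
    rw [this, Set.univ_inter]
    simp
  · filter_upwards with t using (pdf_pos t).le
  · exact pdf_integrable.integrableOn

noncomputable def G (x : ℝ) : ℝ := 1 - stdNormalCDF x

lemma G_pos (x : ℝ) : 0 < G x := by have := cdf_lt_one x; unfold G; linarith

lemma G_lt_one (x : ℝ) : G x < 1 := by have := cdf_pos x; unfold G; linarith

lemma hasDerivAt_G (x : ℝ) : HasDerivAt G (-(stdNormalPDF x)) x := by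
  show HasDerivAt (fun x => 1 - stdNormalCDF x) _ x
  simpa using ((hasDerivAt_cdf x).const_sub 1)

lemma pdf_neg (x : ℝ) : stdNormalPDF (-x) = stdNormalPDF x := by
  unfold stdNormalPDF; ring_nf

lemma cdf_neg (x : ℝ) : stdNormalCDF (-x) = G x := by
  have h1 : stdNormalCDF (-x) = ∫ t in Set.Ioi x, stdNormalPDF t := by
    unfold stdNormalCDF
    have h := integral_comp_neg_Iic (-x) stdNormalPDF
    simp only [pdf_neg, neg_neg] at h
    exact h
  have h2 : stdNormalCDF x + ∫ t in Set.Ioi x, stdNormalPDF t = 1 := by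
    unfold stdNormalCDF
    rw [intervalIntegral.integral_Iic_add_Ioi pdf_integrable.integrableOn
      pdf_integrable.integrableOn, integral_pdf]
  unfold G; linarith

lemma hasDerivAt_pdf (x : ℝ) : HasDerivAt stdNormalPDF (-x * stdNormalPDF x) x := by
  unfold stdNormalPDF
  have h : HasDerivAt (fun t : ℝ => -(t ^ 2) / 2) (-x) x := by
    have := ((hasDerivAt_pow 2 x).neg).div_const 2
    simpa using this.congr_deriv (by ring)
  have := (h.exp).const_mul (Real.sqrt (2 * Real.pi))⁻¹
  exact this.congr_deriv (by ring)

lemma exp_sq_tendsto_zero : Tendsto (fun x : ℝ => Real.exp (-(x ^ 2) / 2)) atTop (nhds 0) := by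
  have h : Tendsto (fun x : ℝ => -(x ^ 2) / 2) atTop atBot := by
    apply Tendsto.atBot_div_const (by norm_num)
    exact (tendsto_neg_atTop_atBot).comp (tendsto_pow_atTop (n := 2) (by norm_num))
  exact Real.tendsto_exp_atBot.comp h

lemma pdf_tendsto_zero : Tendsto stdNormalPDF atTop (nhds 0) := by
  have h2 := exp_sq_tendsto_zero.const_mul ((Real.sqrt (2 * Real.pi))⁻¹)
  rw [mul_zero] at h2
  exact h2.congr (fun x => by unfold stdNormalPDF; ring)

lemma G_tendsto_zero : Tendsto G atTop (nhds 0) := by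
  have := cdf_tendsto_one.const_sub 1
  show Tendsto (fun x => 1 - stdNormalCDF x) atTop (nhds 0)
  simpa using this

/-- If `h` is strictly decreasing on `(0,∞)` (given via derivative `< 0`) and `h → 0`
at `∞`, then `h ≥ 0` on `(0,∞)`. -/
lemma nonneg_of_deriv_neg_tendsto_zero (h h' : ℝ → ℝ)
    (hd : ∀ y ∈ Set.Ioi (0:ℝ), HasDerivAt h (h' y) y)
    (hneg : ∀ y ∈ Set.Ioi (0:ℝ), h' y < 0)
    (htend : Tendsto h atTop (nhds 0)) {x : ℝ} (hx : 0 < x) : 0 ≤ h x := by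
  have hanti : StrictAntiOn h (Set.Ioi 0) := by
    apply strictAntiOn_of_hasDerivWithinAt_neg (f' := h') (convex_Ioi 0)
    · exact fun y hy => ((hd y hy).continuousAt.continuousWithinAt)
    · rw [interior_Ioi]; exact fun y hy => (hd y hy).hasDerivWithinAt
    · rw [interior_Ioi]; exact hneg
  refine le_of_tendsto htend ?_
  filter_upwards [eventually_gt_atTop (max x 0)] with y hy
  have hxy : x < y := lt_of_le_of_lt (le_max_left _ _) hy
  have hy0 : (0:ℝ) < y := lt_of_le_of_lt (le_max_right _ _) hy
  exact (hanti (Set.mem_Ioi.mpr hx) (Set.mem_Ioi.mpr hy0) hxy).le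

/-- Upper Mills bound: for `x > 0`, `G x ≤ φ x / x`. -/
lemma mills_upper {x : ℝ} (hx : 0 < x) : G x ≤ stdNormalPDF x / x := by
  have key := nonneg_of_deriv_neg_tendsto_zero
    (fun y => stdNormalPDF y / y - G y) (fun y => -(stdNormalPDF y) / y ^ 2) ?_ ?_ ?_ hx
  · linarith [key]
  · intro y hy
    have hy0 : (y:ℝ) ≠ 0 := (Set.mem_Ioi.mp hy).ne'
    have h1 : HasDerivAt (fun t => stdNormalPDF t / t)
        ((-y * stdNormalPDF y * y - stdNormalPDF y * 1) / y ^ 2) y :=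
      (hasDerivAt_pdf y).div (hasDerivAt_id y) hy0
    have := h1.sub (hasDerivAt_G y)
    refine this.congr_deriv ?_
    field_simp
    ring
  · intro y hy
    have hy0 : (0:ℝ) < y := hy
    have hp := pdf_pos y
    show -(stdNormalPDF y) / y ^ 2 < 0
    have : 0 < stdNormalPDF y / y ^ 2 := by positivity
    rw [neg_div]
    linarith
  · have h1 : Tendsto (fun y => stdNormalPDF y / y) atTop (nhds 0) := by
      have := pdf_tendsto_zero.div_atTop (tendsto_id (α := ℝ))
      simpa using this
    simpa using h1.sub G_tendsto_zero

/-- Lower Mills bound: for `x > 0`, `x * φ x / (1 + x²) ≤ G x`. -/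
lemma mills_lower {x : ℝ} (hx : 0 < x) : x * stdNormalPDF x / (1 + x ^ 2) ≤ G x := by
  have key := nonneg_of_deriv_neg_tendsto_zero
    (fun y => G y - y * stdNormalPDF y / (1 + y ^ 2))
    (fun y => -(2 * stdNormalPDF y) / (1 + y ^ 2) ^ 2) ?_ ?_ ?_ hx
  · linarith [key]
  · intro y hy
    have hden : (1 + y ^ 2 : ℝ) ≠ 0 := by positivity
    have h1 : HasDerivAt (fun t : ℝ => t * stdNormalPDF t) (1 * stdNormalPDF y + y * (-y * stdNormalPDF y)) y :=
      (hasDerivAt_id y).mul (hasDerivAt_pdf y)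
    have h2 : HasDerivAt (fun t : ℝ => 1 + t ^ 2) (2 * y) y := by
      simpa using ((hasDerivAt_pow 2 y).const_add 1)
    have h3 := h1.div h2 hden
    have := (hasDerivAt_G y).sub h3
    refine this.congr_deriv ?_
    field_simp
    ring
  · intro y hy
    have hy0 : (0:ℝ) < y := hy
    have hp := pdf_pos y
    show -(2 * stdNormalPDF y) / (1 + y ^ 2) ^ 2 < 0
    have : 0 < 2 * stdNormalPDF y / (1 + y ^ 2) ^ 2 := by positivity
    rw [neg_div]
    linarith
  · have h1 : Tendsto (fun y : ℝ => y * stdNormalPDF y / (1 + y ^ 2)) atTop (nhds 0) := by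
      have hb : ∀ᶠ y : ℝ in atTop, ‖y * stdNormalPDF y / (1 + y ^ 2)‖ ≤ stdNormalPDF y := by
        filter_upwards [eventually_gt_atTop (0:ℝ)] with y hy
        have hp := pdf_pos y
        rw [Real.norm_eq_abs, abs_of_nonneg (by positivity)]
        rw [div_le_iff₀ (by positivity)]
        nlinarith [sq_nonneg (y - 1)]
      have := squeeze_zero_norm' hb pdf_tendsto_zero
      simpa using this
    simpa using G_tendsto_zero.sub h1

/-- Mills ratio limit: `x * G x / φ x → 1` as `x → ∞`. -/
lemma tendsto_mills : Tendsto (fun x => x * G x / stdNormalPDF x) atTop (nhds 1) := by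
  have hlow : ∀ᶠ x : ℝ in atTop, x ^ 2 / (1 + x ^ 2) ≤ x * G x / stdNormalPDF x := by
    filter_upwards [eventually_gt_atTop (0:ℝ)] with x hx
    have hp := pdf_pos x
    have := mills_lower hx
    rw [div_le_div_iff₀ (by positivity) hp]
    rw [div_le_iff₀ (by positivity)] at this
    nlinarith
  have hup : ∀ᶠ x : ℝ in atTop, x * G x / stdNormalPDF x ≤ 1 := by
    filter_upwards [eventually_gt_atTop (0:ℝ)] with x hx
    have hp := pdf_pos x
    have := mills_upper hx
    rw [div_le_one hp]
    rw [le_div_iff₀ hx] at this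
    nlinarith
  have hlim : Tendsto (fun x : ℝ => x ^ 2 / (1 + x ^ 2)) atTop (nhds 1) := by
    have : ∀ᶠ x : ℝ in atTop, x ^ 2 / (1 + x ^ 2) = 1 - 1 / (1 + x ^ 2) := by
      filter_upwards [eventually_gt_atTop (0:ℝ)] with x hx
      field_simp
      ring
    rw [tendsto_congr' this]
    have h2 : Tendsto (fun x : ℝ => 1 / (1 + x ^ 2)) atTop (nhds 0) := by
      apply Tendsto.div_atTop tendsto_const_nhds
      exact tendsto_atTop_add_const_left _ 1 (tendsto_pow_atTop (by norm_num))
    simpa using (tendsto_const_nhds (x := (1:ℝ)) (f := atTop)).sub h2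
  exact tendsto_of_tendsto_of_tendsto_of_le_of_le' hlim tendsto_const_nhds hlow hup

lemma sqrt_tendsto_atTop : Tendsto Real.sqrt atTop atTop := by
  apply tendsto_atTop_atTop.mpr
  intro b
  refine ⟨(max b 0) ^ 2, fun a ha => ?_⟩
  have : max b 0 ≤ Real.sqrt a := by
    rw [← Real.sqrt_sq (le_max_right b 0)]
    exact Real.sqrt_le_sqrt ha
  exact le_trans (le_max_left b 0) this

lemma tendsto_lin (b d : ℝ) (hb : 0 < b) :
    Tendsto (fun n : ℝ => b * Real.sqrt n + d) atTop atTop :=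
  tendsto_atTop_add_const_right _ d ((sqrt_tendsto_atTop).const_mul_atTop hb)

lemma tendsto_inv_sqrt : Tendsto (fun n : ℝ => (Real.sqrt n)⁻¹) atTop (nhds 0) :=
  sqrt_tendsto_atTop.inv_tendsto_atTop

/-- `√n * G(b√n+d) / φ(b√n+d) → 1/b`. -/
lemma tendsto_sqrtG (b d : ℝ) (hb : 0 < b) :
    Tendsto (fun n : ℝ => Real.sqrt n * G (b * Real.sqrt n + d) /
      stdNormalPDF (b * Real.sqrt n + d)) atTop (nhds (1 / b)) := by
  have hm : Tendsto (fun n : ℝ => (b * Real.sqrt n + d) * G (b * Real.sqrt n + d) /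
      stdNormalPDF (b * Real.sqrt n + d)) atTop (nhds 1) :=
    tendsto_mills.comp (tendsto_lin b d hb)
  have hs : Tendsto (fun n : ℝ => Real.sqrt n / (b * Real.sqrt n + d)) atTop (nhds (1 / b)) := by
    have h1 : Tendsto (fun n : ℝ => (b + d * (Real.sqrt n)⁻¹)⁻¹) atTop (nhds (1 / b)) := by
      have h2 : Tendsto (fun n : ℝ => b + d * (Real.sqrt n)⁻¹) atTop (nhds b) := by
        have := (tendsto_inv_sqrt.const_mul d).const_add b
        simpa using this
      have := h2.inv₀ hb.ne'
      simpa [one_div] using this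
    apply Tendsto.congr' _ h1
    filter_upwards [(tendsto_lin b d hb).eventually_gt_atTop 0,
      eventually_gt_atTop (0:ℝ)] with n hXn hn
    have hsn : 0 < Real.sqrt n := Real.sqrt_pos.mpr hn
    field_simp
  have := hs.mul hm
  rw [mul_one] at this
  apply Tendsto.congr' _ this
  filter_upwards [(tendsto_lin b d hb).eventually_gt_atTop 0] with n hXn
  have hp := pdf_pos (b * Real.sqrt n + d)
  have := hXn.ne'
  have := hp.ne'
  have : √n * b + d ≠ 0 := by rw [mul_comm]; exact hXn.ne'
  field_simp [(pdf_pos _).ne']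

lemma tendsto_G_comp (b d : ℝ) (hb : 0 < b) :
    Tendsto (fun n : ℝ => G (b * Real.sqrt n + d)) atTop (nhds 0) :=
  G_tendsto_zero.comp (tendsto_lin b d hb)

lemma tendsto_cdf_comp (b d : ℝ) (hb : 0 < b) :
    Tendsto (fun n : ℝ => stdNormalCDF (b * Real.sqrt n + d)) atTop (nhds 1) :=
  cdf_tendsto_one.comp (tendsto_lin b d hb)

/-- pdf ratio tends to zero when the larger slope is in the numerator. -/
lemma tendsto_pdf_ratio (b1 b2 c1 c2 : ℝ) (hb1 : 0 ≤ b1) (h : b1 < b2) :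
    Tendsto (fun n : ℝ => stdNormalPDF (b2 * Real.sqrt n + c2) /
      stdNormalPDF (b1 * Real.sqrt n + c1)) atTop (nhds 0) := by
  have key : Tendsto (fun n : ℝ =>
      ((b1 * Real.sqrt n + c1) ^ 2 - (b2 * Real.sqrt n + c2) ^ 2) / 2) atTop atBot := by
    have hA : (b1 ^ 2 - b2 ^ 2) / 2 < 0 := by nlinarith
    have h1 : Tendsto (fun n : ℝ =>
        (b1 ^ 2 - b2 ^ 2) / 2 * Real.sqrt n + (b1 * c1 - b2 * c2)) atTop atBot := by
      apply tendsto_atBot_add_const_right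
      exact (tendsto_const_mul_atBot_of_neg hA).mpr sqrt_tendsto_atTop
    have h2 := sqrt_tendsto_atTop.atTop_mul_atBot₀ h1
    have h3 := tendsto_atBot_add_const_right _ ((c1 ^ 2 - c2 ^ 2) / 2) h2
    apply h3.congr
    intro n
    ring
  have hexp := Real.tendsto_exp_atBot.comp key
  apply Tendsto.congr' _ hexp
  filter_upwards with n
  unfold stdNormalPDF
  have hc : (Real.sqrt (2 * Real.pi))⁻¹ ≠ 0 := by positivity
  rw [Function.comp]
  rw [mul_div_mul_left _ _ hc, ← Real.exp_sub]
  congr 1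
  ring

lemma p_mem (aU aL c : ℝ) (h : aL < aU) {n : ℝ} (hn : 0 < n) :
    stdNormalCDF (aU * Real.sqrt n - c) - stdNormalCDF (aL * Real.sqrt n - c) ∈ Set.Ioo (0:ℝ) 1 := by
  have hsn : 0 < Real.sqrt n := Real.sqrt_pos.mpr hn
  constructor
  · have : aL * Real.sqrt n - c < aU * Real.sqrt n - c := by nlinarith
    have := cdf_strictMono this
    linarith
  · have h1 := cdf_lt_one (aU * Real.sqrt n - c)
    have h2 := cdf_pos (aL * Real.sqrt n - c)
    linarith

lemma hasDerivAt_F (aU aL c : ℝ) (h : aL < aU) {n : ℝ} (hn : 0 < n) :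
    HasDerivAt (fun m : ℝ =>
      logit (stdNormalCDF (aU * Real.sqrt m - c) - stdNormalCDF (aL * Real.sqrt m - c)))
      ((aU * stdNormalPDF (aU * Real.sqrt n - c) - aL * stdNormalPDF (aL * Real.sqrt n - c)) /
        (2 * Real.sqrt n *
          ((stdNormalCDF (aU * Real.sqrt n - c) - stdNormalCDF (aL * Real.sqrt n - c)) *
           (1 - (stdNormalCDF (aU * Real.sqrt n - c) - stdNormalCDF (aL * Real.sqrt n - c)))))) n := by
  have hsn : 0 < Real.sqrt n := Real.sqrt_pos.mpr hn
  set p : ℝ → ℝ := fun m =>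
    stdNormalCDF (aU * Real.sqrt m - c) - stdNormalCDF (aL * Real.sqrt m - c) with hp
  obtain ⟨hp0, hp1⟩ := p_mem aU aL c h hn
  have hsqrt : HasDerivAt Real.sqrt (1 / (2 * Real.sqrt n)) n := Real.hasDerivAt_sqrt hn.ne'
  have hu : HasDerivAt (fun m : ℝ => aU * Real.sqrt m - c) (aU * (1 / (2 * Real.sqrt n))) n :=
    ((hsqrt.const_mul aU).sub_const c)
  have hl : HasDerivAt (fun m : ℝ => aL * Real.sqrt m - c) (aL * (1 / (2 * Real.sqrt n))) n :=
    ((hsqrt.const_mul aL).sub_const c)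
  have hΦu : HasDerivAt (fun m : ℝ => stdNormalCDF (aU * Real.sqrt m - c))
      (stdNormalPDF (aU * Real.sqrt n - c) * (aU * (1 / (2 * Real.sqrt n)))) n :=
    (hasDerivAt_cdf _).comp n hu
  have hΦl : HasDerivAt (fun m : ℝ => stdNormalCDF (aL * Real.sqrt m - c))
      (stdNormalPDF (aL * Real.sqrt n - c) * (aL * (1 / (2 * Real.sqrt n)))) n :=
    (hasDerivAt_cdf _).comp n hl
  have hpd : HasDerivAt p
      (stdNormalPDF (aU * Real.sqrt n - c) * (aU * (1 / (2 * Real.sqrt n))) -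
       stdNormalPDF (aL * Real.sqrt n - c) * (aL * (1 / (2 * Real.sqrt n)))) n := hΦu.sub hΦl
  have hpn0 : 0 < p n := hp0
  have hpn1 : p n < 1 := hp1
  have hlog1 : HasDerivAt Real.log (p n)⁻¹ (p n) := Real.hasDerivAt_log hpn0.ne'
  have hlog2 : HasDerivAt (fun x : ℝ => Real.log (1 - x)) (-(1 - p n)⁻¹) (p n) := by
    have h1 : HasDerivAt (fun x : ℝ => 1 - x) (-1) (p n) := by
      simpa using (hasDerivAt_id (p n)).const_sub 1
    have := (Real.hasDerivAt_log (ne_of_gt (by linarith : (0:ℝ) < 1 - p n))).comp (p n) h1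
    exact this.congr_deriv (by ring)
  have hlogit : HasDerivAt logit ((p n)⁻¹ + (1 - p n)⁻¹) (p n) := by
    unfold logit
    exact (hlog1.sub hlog2).congr_deriv (by ring)
  have := hlogit.comp n hpd
  refine this.congr_deriv ?_
  rw [hp]
  have hq0 : p n ≠ 0 := hp0.ne'
  have hq1 : (1:ℝ) - p n ≠ 0 := by linarith
  simp only [hp] at hq0 hq1 ⊢
  rw [mul_comm aL (√n)] at hq0 hq1 ⊢
  field_simp
  ring

lemma G_strictAnti : StrictAnti G := fun x y hxy => by
  unfold G; have := cdf_strictMono hxy; linarith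

/-- Outside case: `0 < s < B`, both slopes positive after reflection. -/
lemma tendsto_E_outside (s B d : ℝ) (hs : 0 < s) (hsB : s < B) :
    Tendsto (fun n : ℝ =>
      (B * stdNormalPDF (B * Real.sqrt n + d) - s * stdNormalPDF (s * Real.sqrt n + d)) /
        (2 * Real.sqrt n *
          ((G (s * Real.sqrt n + d) - G (B * Real.sqrt n + d)) *
            (1 - (G (s * Real.sqrt n + d) - G (B * Real.sqrt n + d))))))
      atTop (nhds (-(s ^ 2) / 2)) := by
  have hB : 0 < B := hs.trans hsB
  have hr := tendsto_pdf_ratio s B d d hs.le hsB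
  have hA1 := tendsto_sqrtG s d hs
  have hA2 := tendsto_sqrtG B d hB
  have hw : Tendsto (fun n : ℝ => G (s * Real.sqrt n + d) - G (B * Real.sqrt n + d))
      atTop (nhds 0) := by
    simpa using (tendsto_G_comp s d hs).sub (tendsto_G_comp B d hB)
  -- limit of the reduced expression
  have hnum : Tendsto (fun n : ℝ =>
      B * (stdNormalPDF (B * Real.sqrt n + d) / stdNormalPDF (s * Real.sqrt n + d)) - s)
      atTop (nhds (-s)) := by
    have := (hr.const_mul B).sub_const s
    simpa using this
  have hden : Tendsto (fun n : ℝ =>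
      2 * ((Real.sqrt n * G (s * Real.sqrt n + d) / stdNormalPDF (s * Real.sqrt n + d) -
        (stdNormalPDF (B * Real.sqrt n + d) / stdNormalPDF (s * Real.sqrt n + d)) *
          (Real.sqrt n * G (B * Real.sqrt n + d) / stdNormalPDF (B * Real.sqrt n + d))) *
        (1 - (G (s * Real.sqrt n + d) - G (B * Real.sqrt n + d)))))
      atTop (nhds (2 * ((1 / s - 0 * (1 / B)) * (1 - 0)))) := by
    exact (((hA1.sub (hr.mul hA2)).mul ((tendsto_const_nhds).sub hw)).const_mul 2)
  have hden' : (2 * ((1 / s - 0 * (1 / B)) * (1 - (0:ℝ)))) = 2 / s := by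
    field_simp
    ring
  rw [hden'] at hden
  have hlim := hnum.div hden (by positivity)
  have hval : -s / (2 / s) = -(s ^ 2) / 2 := by
    field_simp
  rw [hval] at hlim
  apply Tendsto.congr' _ hlim
  filter_upwards [eventually_gt_atTop (0:ℝ)] with n hn
  have hsn : 0 < Real.sqrt n := Real.sqrt_pos.mpr hn
  have hps := (pdf_pos (s * Real.sqrt n + d)).ne'
  have hpB := (pdf_pos (B * Real.sqrt n + d)).ne'
  simp only [Pi.div_apply]
  have e1 : B * (stdNormalPDF (B * Real.sqrt n + d) / stdNormalPDF (s * Real.sqrt n + d)) - s =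
      (B * stdNormalPDF (B * Real.sqrt n + d) - s * stdNormalPDF (s * Real.sqrt n + d)) /
        stdNormalPDF (s * Real.sqrt n + d) := by
    field_simp [(pdf_pos _).ne']
  have e2 : 2 * ((Real.sqrt n * G (s * Real.sqrt n + d) / stdNormalPDF (s * Real.sqrt n + d) -
      stdNormalPDF (B * Real.sqrt n + d) / stdNormalPDF (s * Real.sqrt n + d) *
        (Real.sqrt n * G (B * Real.sqrt n + d) / stdNormalPDF (B * Real.sqrt n + d))) *
      (1 - (G (s * Real.sqrt n + d) - G (B * Real.sqrt n + d)))) =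
      (2 * Real.sqrt n * ((G (s * Real.sqrt n + d) - G (B * Real.sqrt n + d)) *
        (1 - (G (s * Real.sqrt n + d) - G (B * Real.sqrt n + d))))) /
        stdNormalPDF (s * Real.sqrt n + d) := by
    field_simp [(pdf_pos _).ne']
  rw [e1, e2, div_div_div_cancel_right₀ hps]

/-- Inside case: convex-combination helper. -/
lemma convex_tendsto {f g w1 w2 : ℝ → ℝ} {a : ℝ}
    (hf : Tendsto f atTop (nhds a)) (hg : Tendsto g atTop (nhds a))
    (hw1 : ∀ᶠ n in atTop, 0 < w1 n) (hw2 : ∀ᶠ n in atTop, 0 < w2 n) :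
    Tendsto (fun n => (w1 n * f n + w2 n * g n) / (w1 n + w2 n)) atTop (nhds a) := by
  have hmin : Tendsto (fun n => min (f n) (g n)) atTop (nhds a) := by
    simpa using hf.min hg
  have hmax : Tendsto (fun n => max (f n) (g n)) atTop (nhds a) := by
    simpa using hf.max hg
  apply tendsto_of_tendsto_of_tendsto_of_le_of_le' hmin hmax
  · filter_upwards [hw1, hw2] with n h1 h2
    rw [le_div_iff₀ (by linarith)]
    have := min_le_left (f n) (g n)
    have := min_le_right (f n) (g n)
    nlinarith
  · filter_upwards [hw1, hw2] with n h1 h2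
    rw [div_le_iff₀ (by linarith)]
    have := le_max_left (f n) (g n)
    have := le_max_right (f n) (g n)
    nlinarith

/-- Inside case: `0 < b1 ≤ b2`. -/
lemma tendsto_E_inside (b1 b2 d1 d2 : ℝ) (h1 : 0 < b1) (h12 : b1 ≤ b2) :
    Tendsto (fun n : ℝ =>
      (b1 * stdNormalPDF (b1 * Real.sqrt n + d1) + b2 * stdNormalPDF (b2 * Real.sqrt n + d2)) /
        (2 * Real.sqrt n *
          ((1 - (G (b1 * Real.sqrt n + d1) + G (b2 * Real.sqrt n + d2))) *
            (G (b1 * Real.sqrt n + d1) + G (b2 * Real.sqrt n + d2)))))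
      atTop (nhds (b1 ^ 2 / 2)) := by
  have h2 : 0 < b2 := lt_of_lt_of_le h1 h12
  have hA1 := tendsto_sqrtG b1 d1 h1
  have hA2 := tendsto_sqrtG b2 d2 h2
  have hq : Tendsto (fun n : ℝ => G (b1 * Real.sqrt n + d1) + G (b2 * Real.sqrt n + d2))
      atTop (nhds 0) := by
    simpa using (tendsto_G_comp b1 d1 h1).add (tendsto_G_comp b2 d2 h2)
  rcases eq_or_lt_of_le h12 with rfl | hlt
  · -- equal slopes: convex combination argument
    have hW : Tendsto (fun n : ℝ =>
        (stdNormalPDF (b1 * Real.sqrt n + d1) *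
            (Real.sqrt n * G (b1 * Real.sqrt n + d1) / stdNormalPDF (b1 * Real.sqrt n + d1)) +
         stdNormalPDF (b1 * Real.sqrt n + d2) *
            (Real.sqrt n * G (b1 * Real.sqrt n + d2) / stdNormalPDF (b1 * Real.sqrt n + d2))) /
        (stdNormalPDF (b1 * Real.sqrt n + d1) + stdNormalPDF (b1 * Real.sqrt n + d2)))
        atTop (nhds (1 / b1)) := by
      apply convex_tendsto hA1 hA2
      · filter_upwards with n using pdf_pos _
      · filter_upwards with n using pdf_pos _
    have hlim := ((((tendsto_const_nhds (x := (1:ℝ)) (f := atTop (α := ℝ))).sub hq).mul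
      hW).const_mul 2)
    have hlim2 := (tendsto_const_nhds (x := b1) (f := atTop (α := ℝ))).div hlim (by
      have : 2 * ((1 - 0) * (1 / b1)) = 2 / b1 := by field_simp; ring
      rw [this]
      positivity)
    have hval : b1 / (2 * ((1 - 0) * (1 / b1))) = b1 ^ 2 / 2 := by
      field_simp; ring
    rw [hval] at hlim2
    apply Tendsto.congr' _ hlim2
    filter_upwards [eventually_gt_atTop (0:ℝ),
      hq.eventually_lt_const (by norm_num : (0:ℝ) < 1)] with n hn hq1
    have hsn : 0 < Real.sqrt n := Real.sqrt_pos.mpr hn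
    have hp1 := pdf_pos (b1 * Real.sqrt n + d1)
    have hp2 := pdf_pos (b1 * Real.sqrt n + d2)
    have hG1 := G_pos (b1 * Real.sqrt n + d1)
    have hG2 := G_pos (b1 * Real.sqrt n + d2)
    have h1q : 0 < 1 - (G (b1 * Real.sqrt n + d1) + G (b1 * Real.sqrt n + d2)) := by linarith
    simp only [Pi.div_apply]
    have t1 : 0 < Real.sqrt n * G (b1 * Real.sqrt n + d1) / stdNormalPDF (b1 * Real.sqrt n + d1) :=
      div_pos (mul_pos hsn hG1) hp1
    have t2 : 0 < Real.sqrt n * G (b1 * Real.sqrt n + d2) / stdNormalPDF (b1 * Real.sqrt n + d2) :=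
      div_pos (mul_pos hsn hG2) hp2
    have hWpos : 0 < (stdNormalPDF (b1 * Real.sqrt n + d1) *
          (Real.sqrt n * G (b1 * Real.sqrt n + d1) / stdNormalPDF (b1 * Real.sqrt n + d1)) +
        stdNormalPDF (b1 * Real.sqrt n + d2) *
          (Real.sqrt n * G (b1 * Real.sqrt n + d2) / stdNormalPDF (b1 * Real.sqrt n + d2))) /
        (stdNormalPDF (b1 * Real.sqrt n + d1) + stdNormalPDF (b1 * Real.sqrt n + d2)) :=
      div_pos (add_pos (mul_pos hp1 t1) (mul_pos hp2 t2)) (add_pos hp1 hp2)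
    have hc : (2:ℝ) * ((1 - (G (b1 * Real.sqrt n + d1) + G (b1 * Real.sqrt n + d2))) *
        ((stdNormalPDF (b1 * Real.sqrt n + d1) *
            (Real.sqrt n * G (b1 * Real.sqrt n + d1) / stdNormalPDF (b1 * Real.sqrt n + d1)) +
          stdNormalPDF (b1 * Real.sqrt n + d2) *
            (Real.sqrt n * G (b1 * Real.sqrt n + d2) / stdNormalPDF (b1 * Real.sqrt n + d2))) /
          (stdNormalPDF (b1 * Real.sqrt n + d1) + stdNormalPDF (b1 * Real.sqrt n + d2)))) ≠ 0 :=
      ne_of_gt (mul_pos two_pos (mul_pos h1q hWpos))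
    have hd : 2 * Real.sqrt n *
        ((1 - (G (b1 * Real.sqrt n + d1) + G (b1 * Real.sqrt n + d2))) *
          (G (b1 * Real.sqrt n + d1) + G (b1 * Real.sqrt n + d2))) ≠ 0 :=
      ne_of_gt (mul_pos (mul_pos two_pos hsn) (mul_pos h1q (add_pos hG1 hG2)))
    rw [div_eq_div_iff hc hd]
    have hp1' := hp1.ne'
    have hp2' := hp2.ne'
    have hp12' := (add_pos hp1 hp2).ne'
    field_simp
  · -- distinct slopes: pdf ratio tends to zero
    have hr := tendsto_pdf_ratio b1 b2 d1 d2 h1.le hlt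
    have hnum : Tendsto (fun n : ℝ =>
        b1 + b2 * (stdNormalPDF (b2 * Real.sqrt n + d2) / stdNormalPDF (b1 * Real.sqrt n + d1)))
        atTop (nhds b1) := by
      have := (hr.const_mul b2).const_add b1
      simpa using this
    have hden : Tendsto (fun n : ℝ =>
        2 * ((1 - (G (b1 * Real.sqrt n + d1) + G (b2 * Real.sqrt n + d2))) *
          (Real.sqrt n * G (b1 * Real.sqrt n + d1) / stdNormalPDF (b1 * Real.sqrt n + d1) +
            (stdNormalPDF (b2 * Real.sqrt n + d2) / stdNormalPDF (b1 * Real.sqrt n + d1)) *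
              (Real.sqrt n * G (b2 * Real.sqrt n + d2) / stdNormalPDF (b2 * Real.sqrt n + d2)))))
        atTop (nhds (2 * ((1 - 0) * (1 / b1 + 0 * (1 / b2))))) :=
      ((((tendsto_const_nhds).sub hq).mul (hA1.add (hr.mul hA2))).const_mul 2)
    have hval : (2 * ((1 - 0) * (1 / b1 + 0 * (1 / b2))) : ℝ) = 2 / b1 := by field_simp; ring
    rw [hval] at hden
    have hlim := hnum.div hden (by positivity)
    have hval2 : b1 / (2 / b1) = b1 ^ 2 / 2 := by field_simp
    rw [hval2] at hlim
    apply Tendsto.congr' _ hlim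
    filter_upwards [eventually_gt_atTop (0:ℝ)] with n hn
    have hsn : 0 < Real.sqrt n := Real.sqrt_pos.mpr hn
    have hp1 := (pdf_pos (b1 * Real.sqrt n + d1)).ne'
    have hp2 := (pdf_pos (b2 * Real.sqrt n + d2)).ne'
    simp only [Pi.div_apply]
    have e1 : b1 + b2 * (stdNormalPDF (b2 * Real.sqrt n + d2) / stdNormalPDF (b1 * Real.sqrt n + d1)) =
        (b1 * stdNormalPDF (b1 * Real.sqrt n + d1) + b2 * stdNormalPDF (b2 * Real.sqrt n + d2)) /
          stdNormalPDF (b1 * Real.sqrt n + d1) := by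
      field_simp
    have e2 : 2 * ((1 - (G (b1 * Real.sqrt n + d1) + G (b2 * Real.sqrt n + d2))) *
        (Real.sqrt n * G (b1 * Real.sqrt n + d1) / stdNormalPDF (b1 * Real.sqrt n + d1) +
          stdNormalPDF (b2 * Real.sqrt n + d2) / stdNormalPDF (b1 * Real.sqrt n + d1) *
            (Real.sqrt n * G (b2 * Real.sqrt n + d2) / stdNormalPDF (b2 * Real.sqrt n + d2)))) =
        (2 * Real.sqrt n *
          ((1 - (G (b1 * Real.sqrt n + d1) + G (b2 * Real.sqrt n + d2))) *
            (G (b1 * Real.sqrt n + d1) + G (b2 * Real.sqrt n + d2)))) /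
          stdNormalPDF (b1 * Real.sqrt n + d1) := by
      field_simp [(pdf_pos _).ne']
    rw [e1, e2, div_div_div_cancel_right₀ hp1]

lemma cdf_eq_one_sub_G (x : ℝ) : stdNormalCDF x = 1 - G x := by unfold G; ring


/-- Theorem 1 of the paper: the derivative of the logit of the proxy posterior
probability, as a function of the sample size `n`, converges to
`(1/2 − 𝟙{θ ∉ (δ_L, δ_U)}) · min{a_U², a_L²}` as `n → ∞`. -/
theorem tendsto_deriv_logit_proxy (σ δL δU θ c : ℝ) (hσ : 0 < σ) (hδ : δL < δU)
    (hθL : θ ≠ δL) (hθU : θ ≠ δU) (aU aL : ℝ)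
    (haU : aU = (δU - θ) / σ) (haL : aL = (δL - θ) / σ) :
    Tendsto
      (deriv fun n : ℝ =>
        logit (stdNormalCDF (aU * Real.sqrt n - c) - stdNormalCDF (aL * Real.sqrt n - c)))
      atTop
      (nhds ((1 / 2 - (if θ ∈ Set.Ioo δL δU then (0 : ℝ) else 1)) *
        min (aU ^ 2) (aL ^ 2))) := by
  have hALU : aL < aU := by
    rw [haL, haU, div_lt_div_iff₀ hσ hσ]
    nlinarith
  -- reduce to explicit formula E
  have key : ∀ L : ℝ,
      Tendsto (fun n : ℝ =>
        (aU * stdNormalPDF (aU * Real.sqrt n - c) - aL * stdNormalPDF (aL * Real.sqrt n - c)) /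
          (2 * Real.sqrt n *
            ((stdNormalCDF (aU * Real.sqrt n - c) - stdNormalCDF (aL * Real.sqrt n - c)) *
             (1 - (stdNormalCDF (aU * Real.sqrt n - c) - stdNormalCDF (aL * Real.sqrt n - c))))))
        atTop (nhds L) →
      Tendsto (deriv fun n : ℝ =>
        logit (stdNormalCDF (aU * Real.sqrt n - c) - stdNormalCDF (aL * Real.sqrt n - c)))
        atTop (nhds L) := by
    intro L hE
    apply Tendsto.congr' _ hE
    filter_upwards [eventually_gt_atTop (0:ℝ)] with n hn
    exact ((hasDerivAt_F aU aL c hALU hn).deriv).symm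
  apply key
  by_cases hmem : θ ∈ Set.Ioo δL δU
  · -- inside: aL < 0 < aU
    rw [if_pos hmem]
    obtain ⟨hL, hU⟩ := hmem
    have haUpos : 0 < aU := by rw [haU]; exact div_pos (by linarith) hσ
    have haLneg : aL < 0 := by rw [haL]; exact div_neg_of_neg_of_pos (by linarith) hσ
    rcases le_total aU (-aL) with hle | hle
    · -- min is aU^2
      have hmin : min (aU ^ 2) (aL ^ 2) = aU ^ 2 := min_eq_left (by nlinarith)
      rw [hmin]
      have hlem := tendsto_E_inside aU (-aL) (-c) c haUpos hle
      simp only [← sub_eq_add_neg] at hlem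
      have hval : aU ^ 2 / 2 = (1/2 - 0) * aU ^ 2 := by ring
      rw [hval] at hlem
      apply Tendsto.congr _ hlem
      intro n
      rw [show aL * Real.sqrt n - c = -(-aL * Real.sqrt n + c) from by ring, pdf_neg, cdf_neg,
        cdf_eq_one_sub_G (aU * Real.sqrt n - c)]
      ring
    · -- min is aL^2
      have hmin : min (aU ^ 2) (aL ^ 2) = aL ^ 2 := min_eq_right (by nlinarith)
      rw [hmin]
      have hlem := tendsto_E_inside (-aL) aU c (-c) (by linarith) hle
      simp only [← sub_eq_add_neg] at hlem
      have hval : (-aL) ^ 2 / 2 = (1/2 - 0) * aL ^ 2 := by ring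
      rw [hval] at hlem
      apply Tendsto.congr _ hlem
      intro n
      rw [show aL * Real.sqrt n - c = -(-aL * Real.sqrt n + c) from by ring, pdf_neg, cdf_neg,
        cdf_eq_one_sub_G (aU * Real.sqrt n - c)]
      ring
  · -- outside
    rw [if_neg hmem]
    simp only [Set.mem_Ioo, not_and_or, not_lt] at hmem
    rcases hmem with hout | hout
    · -- θ ≤ δL, so θ < δL : 0 < aL < aU
      have hθ : θ < δL := lt_of_le_of_ne hout hθL
      have haLpos : 0 < aL := by rw [haL]; exact div_pos (by linarith) hσ
      have hmin : min (aU ^ 2) (aL ^ 2) = aL ^ 2 := min_eq_right (by nlinarith)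
      rw [hmin]
      have hlem := tendsto_E_outside aL aU (-c) haLpos hALU
      simp only [← sub_eq_add_neg] at hlem
      have hval : -(aL ^ 2) / 2 = (1/2 - 1) * aL ^ 2 := by ring
      rw [hval] at hlem
      apply Tendsto.congr _ hlem
      intro n
      rw [cdf_eq_one_sub_G (aU * Real.sqrt n - c), cdf_eq_one_sub_G (aL * Real.sqrt n - c)]
      ring
    · -- δU ≤ θ, so δU < θ : aL < aU < 0
      have hθ : δU < θ := lt_of_le_of_ne hout (Ne.symm hθU)
      have haUneg : aU < 0 := by rw [haU]; exact div_neg_of_neg_of_pos (by linarith) hσ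
      have hmin : min (aU ^ 2) (aL ^ 2) = aU ^ 2 := min_eq_left (by nlinarith)
      rw [hmin]
      have hlem := tendsto_E_outside (-aU) (-aL) c (by linarith) (by linarith)
      have hval : -((-aU) ^ 2) / 2 = (1/2 - 1) * aU ^ 2 := by ring
      rw [hval] at hlem
      apply Tendsto.congr _ hlem
      intro n
      rw [show aL * Real.sqrt n - c = -(-aL * Real.sqrt n + c) from by ring,
        show aU * Real.sqrt n - c = -(-aU * Real.sqrt n + c) from by ring,
        pdf_neg, pdf_neg, cdf_neg, cdf_neg]
      ring
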